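/- For all real numbers t and s with s ≠ 0, the Lie algebra 𝔫_{t,s} is isomorphic, as a real Lie algebra, to the real Lie algebra underlying the complex Heisenberg Lie algebra, i.e. the Lie algebra of strictly upper triangular 3×3 complex matrices with the commutator bracket, regarded as a 6-dimensional real Lie algebra. -/

import Mathlib

/-!
The complex Heisenberg algebra is `ℂ³` with bracket `⁅(a, b, c), (a', b', c')⁆ = (0, 0, ab' - ba')`.
Choose `r ≠ 0` with `s²r² = s² + 2t²`. The vectors `(1, 0, 0)`, `(ri, -t, 0)`, `(0, -s, 0)`,
`(-2t/s, -sri, 0)`, `(0, 0, 1)`, `(0, 0, ri)` are `ℝ`-linearly independent, hence a real basis,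
and satisfy the bracket relations of `e₁, …, e₆`. The only relation that constrains `r` is
`⁅e₂, e₄⁆ = s e₅`: it reads `ri · (-sri) - (-t)(-2t/s) = sr² - 2t²/s = s`.
-/
attribute [local instance 100] LieRing.ofAssociativeRing

/-- The strictly upper triangular `3 × 3` complex matrices, with the commutator bracket,
regarded as a real Lie subalgebra of the real Lie algebra of all `3 × 3` complex matrices. -/
def complexHeisenberg : LieSubalgebra ℝ (Matrix (Fin 3) (Fin 3) ℂ) where
  carrier := {M | ∀ i j : Fin 3, j ≤ i → M i j = 0}
  add_mem' := fun ha hb i j hij => by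
    simp only [Matrix.add_apply, ha i j hij, hb i j hij, add_zero]
  zero_mem' := fun i j _ => rfl
  smul_mem' := fun c M hM i j hij => by
    simp only [Matrix.smul_apply, hM i j hij, smul_zero]
  lie_mem' := by
    intro x y hx hy i j hij
    rw [Ring.lie_def]
    simp only [Matrix.sub_apply, Matrix.mul_apply]
    rw [Finset.sum_eq_zero, Finset.sum_eq_zero, sub_zero]
    · intro k _
      rcases le_or_gt k i with h | h
      · rw [hy i k h, zero_mul]
      · rw [hx k j (hij.trans h.le), mul_zero]
    · intro k _
      rcases le_or_gt k i with h | h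
      · rw [hx i k h, zero_mul]
      · rw [hy k j (hij.trans h.le), mul_zero]

open Module

theorem LinearMap.map_lie_of_basis {R ι L L' : Type*} [CommRing R] [LinearOrder ι]
    [LieRing L] [LieAlgebra R L] [LieRing L'] [LieAlgebra R L'] (b : Basis ι R L)
    (φ : L →ₗ[R] L') (h : ∀ i j, i < j → φ ⁅b i, b j⁆ = ⁅φ (b i), φ (b j)⁆) (x y : L) :
    φ ⁅x, y⁆ = ⁅φ x, φ y⁆ := by
  have key : (LieModule.toEnd R L L : L →ₗ[R] L →ₗ[R] L).compr₂ φ =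
      (LieModule.toEnd R L' L' : L' →ₗ[R] L' →ₗ[R] L').compl₁₂ φ φ := by
    refine LinearMap.ext_basis b b fun i j => ?_
    simp only [LinearMap.compr₂_apply, LinearMap.compl₁₂_apply, LieHom.coe_toLinearMap,
      LieModule.toEnd_apply_apply]
    rcases lt_trichotomy i j with hij | rfl | hji
    · exact h i j hij
    · simp only [lie_self, map_zero]
    · rw [← lie_skew, map_neg, h j i hji, lie_skew]
  simpa using LinearMap.congr_fun₂ key x y

noncomputable def LieEquiv.ofBases {R ι L L' : Type*} [CommRing R] [LinearOrder ι]
    [LieRing L] [LieAlgebra R L] [LieRing L'] [LieAlgebra R L'] (b : Basis ι R L)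
    (b' : Basis ι R L') (h : ∀ i j, i < j → b.equiv b' (.refl ι) ⁅b i, b j⁆ = ⁅b' i, b' j⁆) :
    L ≃ₗ⁅R⁆ L' :=
  { b.equiv b' (.refl ι) with
    map_lie' := LinearMap.map_lie_of_basis b _ (by simpa using h) _ _ }

namespace complexHeisenberg

def ofTriple : (ℂ × ℂ × ℂ) ≃ₗ[ℝ] complexHeisenberg where
  toFun v := ⟨!![0, v.1, v.2.2; 0, 0, v.2.1; 0, 0, 0], by
    intro i j hij
    fin_cases i <;> fin_cases j <;> first | rfl | exact absurd hij (by decide)⟩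
  invFun M := (M.1 0 1, M.1 1 2, M.1 0 2)
  map_add' v w := by
    ext i j
    fin_cases i <;> fin_cases j <;> simp
  map_smul' c v := by
    ext i j
    fin_cases i <;> fin_cases j <;> simp
  left_inv v := rfl
  right_inv := by
    rintro ⟨M, hM⟩
    ext i j
    fin_cases i <;> fin_cases j <;> first | exact (hM _ _ (by decide)).symm | rfl

theorem coe_ofTriple (v : ℂ × ℂ × ℂ) :
    (ofTriple v : Matrix (Fin 3) (Fin 3) ℂ) = !![0, v.1, v.2.2; 0, 0, v.2.1; 0, 0, 0] :=
  rfl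

theorem lie_ofTriple (v w : ℂ × ℂ × ℂ) :
    ⁅ofTriple v, ofTriple w⁆ = ofTriple (0, 0, v.1 * w.2.1 - v.2.1 * w.1) := by
  ext i j
  simp only [LieSubalgebra.coe_bracket, Ring.lie_def]
  fin_cases i <;> fin_cases j <;> simp [coe_ofTriple, mul_comm]

end complexHeisenberg

open Complex complexHeisenberg

noncomputable def ntsFrame (t s r : ℝ) : Fin 6 → ℂ × ℂ × ℂ :=
  ![(1, 0, 0), (r * I, -t, 0), (0, -s, 0), (-(2 * t / s), -(s * r) * I, 0), (0, 0, 1),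
    (0, 0, r * I)]

theorem linearIndependent_ntsFrame (t : ℝ) {s r : ℝ} (hs : s ≠ 0) (hr : r ≠ 0) :
    LinearIndependent ℝ (ntsFrame t s r) := by
  rw [Fintype.linearIndependent_iff]
  intro g hg
  simp only [ntsFrame, Fin.sum_univ_six, Prod.ext_iff, Complex.ext_iff] at hg
  obtain ⟨⟨ha_re, ha_im⟩, ⟨hb_re, hb_im⟩, hc_re, hc_im⟩ := hg
  have h1 : g 1 = 0 := by simpa [hr] using ha_im
  have h3 : g 3 = 0 := by simpa [hs, hr] using hb_im
  have h2 : g 2 = 0 := by simpa [h1, hs] using hb_re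
  have h0 : g 0 = 0 := by simpa [h3] using ha_re
  have h4 : g 4 = 0 := by simpa using hc_re
  have h5 : g 5 = 0 := by simpa [hr] using hc_im
  intro i
  fin_cases i <;> assumption

noncomputable def ntsBasis (t : ℝ) {s r : ℝ} (hs : s ≠ 0) (hr : r ≠ 0) :
    Basis (Fin 6) ℝ complexHeisenberg :=
  (basisOfLinearIndependentOfCardEqFinrank (linearIndependent_ntsFrame t hs hr)
    (by simp [Module.finrank_prod, Complex.finrank_real_complex])).map ofTriple

theorem ntsBasis_apply (t : ℝ) {s r : ℝ} (hs : s ≠ 0) (hr : r ≠ 0) (k : Fin 6) :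
    ntsBasis t hs hr k = ofTriple (ntsFrame t s r k) := by
  simp [ntsBasis]

theorem lie_ntsBasis (t : ℝ) {s r : ℝ} (hs : s ≠ 0) (hr : r ≠ 0)
    (hr2 : s ^ 2 * r ^ 2 = s ^ 2 + 2 * t ^ 2) :
    let b := ntsBasis t hs hr
    ⁅b 0, b 1⁆ = (-t) • b 4 ∧ ⁅b 2, b 3⁆ = (-(2 * t)) • b 4 ∧ ⁅b 0, b 2⁆ = (-s) • b 4 ∧
      ⁅b 1, b 3⁆ = s • b 4 ∧ ⁅b 0, b 3⁆ = (-s) • b 5 ∧ ⁅b 1, b 2⁆ = (-s) • b 5 ∧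
      ∀ i, ⁅b i, b 4⁆ = 0 ∧ ⁅b i, b 5⁆ = 0 := by
  have hsC : (s : ℂ) ≠ 0 := mod_cast hs
  have hrC : (s : ℂ) ^ 2 * r ^ 2 = s ^ 2 + 2 * t ^ 2 := mod_cast hr2
  simp only [ntsBasis_apply, lie_ofTriple, ← map_smul, ntsFrame]
  refine ⟨?_, ?_, ?_, ?_, ?_, ?_, fun i => ⟨?_, ?_⟩⟩ <;> congr 1 <;>
    simp only [Matrix.cons_val, Prod.smul_mk, Prod.neg_mk, Prod.ext_iff, Prod.fst_zero,
      Prod.snd_zero, EmbeddingLike.map_eq_zero_iff, real_smul, ofReal_mul, ofReal_ofNat, neg_smul,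
      neg_zero, one_mul, mul_one, zero_mul, mul_zero, sub_zero, zero_sub, true_and]
  · field_simp
  · field_simp
    linear_combination hrC - (s : ℂ) ^ 2 * r ^ 2 * I_sq
  · ring
  · ring

theorem nts_iso_complexHeisenberg (t s : ℝ) (hs : s ≠ 0)
    (L : Type) [LieRing L] [LieAlgebra ℝ L] (e : Module.Basis (Fin 6) ℝ L)
    (h01 : ⁅e 0, e 1⁆ = (-t) • e 4) (h23 : ⁅e 2, e 3⁆ = (-(2*t)) • e 4)
    (h02 : ⁅e 0, e 2⁆ = (-s) • e 4) (h13 : ⁅e 1, e 3⁆ = s • e 4)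
    (h03 : ⁅e 0, e 3⁆ = (-s) • e 5) (h12 : ⁅e 1, e 2⁆ = (-s) • e 5)
    (h04 : ⁅e 0, e 4⁆ = 0) (h05 : ⁅e 0, e 5⁆ = 0)
    (h14 : ⁅e 1, e 4⁆ = 0) (h15 : ⁅e 1, e 5⁆ = 0)
    (h24 : ⁅e 2, e 4⁆ = 0) (h25 : ⁅e 2, e 5⁆ = 0)
    (h34 : ⁅e 3, e 4⁆ = 0) (h35 : ⁅e 3, e 5⁆ = 0)
    (h45 : ⁅e 4, e 5⁆ = 0) :
    Nonempty (L ≃ₗ⁅ℝ⁆ complexHeisenberg) := by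
  obtain ⟨r, hr, hr2⟩ : ∃ r : ℝ, r ≠ 0 ∧ s ^ 2 * r ^ 2 = s ^ 2 + 2 * t ^ 2 := by
    have hq : (0 : ℝ) < 1 + 2 * t ^ 2 / s ^ 2 := by positivity
    refine ⟨√(1 + 2 * t ^ 2 / s ^ 2), (Real.sqrt_pos.mpr hq).ne', ?_⟩
    rw [Real.sq_sqrt hq.le]
    field_simp
  obtain ⟨l01, l23, l02, l13, l03, l12, lcentral⟩ := lie_ntsBasis t hs hr hr2
  refine ⟨LieEquiv.ofBases e (ntsBasis t hs hr) fun i j => ?_⟩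
  fin_cases i <;> fin_cases j <;>
    simp [h01, h23, h02, h13, h03, h12, h04, h05, h14, h15, h24, h25, h34, h35, h45,
      l01, l23, l02, l13, l03, l12, lcentral]
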